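/- arXiv:2307.16817 — 6 statements merged into one kernel-verified Lean document; each statement's English description precedes it below -/
import Mathlib

section
/- Let n ≥ 1, let x_1, …, x_{n+1} and y_1, …, y_n be real numbers, and define L_n(y_1,…,y_n; x_1,…,x_{n+1}) = Σ_{1≤i<j≤n+1} |x_i − x_j| + Σ_{1≤i<j≤n} |y_i − y_j| − Σ_{i=1}^{n+1} Σ_{j=1}^{n} |x_i − y_j|. Then L_n(y_1,…,y_n; x_1,…,x_{n+1}) ≤ 0. -/
/-!
Writing `|u - v| = ∫ (1[u ≤ t] - 1[v ≤ t])² dt` turns `L_n` into the integral over `t` of the same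
expression with `|a - b|` replaced by `(a - b)²` and the points replaced by their `0/1` indicators
`1[· ≤ t]`. For any values `a` (`m` of them) and `b` (`k` of them) this quadratic expression equals
`(m - k)(Σ a² - Σ b²) - (Σ a - Σ b)²`; for indicators it is `(m - k) d - d²` with `d` the integer
`#{i | x_i ≤ t} - #{j | y_j ≤ t}`, which is nonpositive as soon as `m - k ∈ {0, 1}`.
-/

open Finset MeasureTheory

theorem Int.mul_le_sq_of_nonneg_of_le_one {c : ℤ} (hc₀ : 0 ≤ c) (hc₁ : c ≤ 1) (d : ℤ) :
    c * d ≤ d ^ 2 := by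
  rcases le_or_gt d 0 with hd | hd <;> nlinarith

section

variable {α ι κ : Type*} [Fintype ι] [Fintype κ]

theorem sum_sum_sq_sub (a : ι → ℝ) (b : κ → ℝ) :
    ∑ i, ∑ j, (a i - b j) ^ 2 =
      Fintype.card κ * ∑ i, a i ^ 2 + Fintype.card ι * ∑ j, b j ^ 2
        - 2 * (∑ i, a i) * ∑ j, b j := by
  simp only [sub_sq, sum_add_distrib, sum_sub_distrib, sum_const, card_univ, nsmul_eq_mul,
    mul_sum, sum_mul]
  rw [sum_comm (f := fun j i => 2 * a i * b j)]
  ring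

theorem sum_indicator_one_comp (s : Set α) [DecidablePred (· ∈ s)] (x : ι → α) :
    ∑ i, s.indicator (1 : α → ℝ) (x i) = #{i | x i ∈ s} := by
  simp [Set.indicator_apply, sum_boole]

variable [LinearOrder ι] [LinearOrder κ]

def pairSum (g : α → α → ℝ) (x : ι → α) : ℝ :=
  ∑ i, ∑ j, if i < j then g (x i) (x j) else 0

def pairEnergy (g : α → α → ℝ) (x : ι → α) (y : κ → α) : ℝ :=
  pairSum g x + pairSum g y - ∑ i, ∑ j, g (x i) (y j)

theorem two_mul_pairSum {g : α → α → ℝ} (hsymm : ∀ u v, g u v = g v u) (hdiag : ∀ u, g u u = 0)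
    (x : ι → α) : 2 * pairSum g x = ∑ i, ∑ j, g (x i) (x j) := by
  have hsplit : ∀ i j, g (x i) (x j) =
      (if i < j then g (x i) (x j) else 0) + (if j < i then g (x j) (x i) else 0) := by
    intro i j
    rcases lt_trichotomy i j with h | rfl | h
    · simp [h, h.not_gt]
    · simp [hdiag]
    · simp [h, h.not_gt, hsymm]
  rw [sum_congr rfl fun i _ => sum_congr rfl fun j _ => hsplit i j]
  simp only [sum_add_distrib]
  rw [sum_comm (f := fun i j => if j < i then g (x j) (x i) else 0), pairSum]
  ring

theorem pairEnergy_sq_sub (φ : α → ℝ) (x : ι → α) (y : κ → α) :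
    pairEnergy (fun u v => (φ u - φ v) ^ 2) x y =
      ((Fintype.card ι : ℝ) - Fintype.card κ) * (∑ i, φ (x i) ^ 2 - ∑ j, φ (y j) ^ 2)
        - (∑ i, φ (x i) - ∑ j, φ (y j)) ^ 2 := by
  have hsymm : ∀ u v, (φ u - φ v) ^ 2 = (φ v - φ u) ^ 2 := fun u v => by ring
  have hdiag : ∀ u, (φ u - φ u) ^ 2 = 0 := fun u => by ring
  have hx := two_mul_pairSum hsymm hdiag x
  have hy := two_mul_pairSum hsymm hdiag y
  rw [sum_sum_sq_sub (fun i => φ (x i)) (fun i => φ (x i))] at hx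
  rw [sum_sum_sq_sub (fun j => φ (y j)) (fun j => φ (y j))] at hy
  rw [pairEnergy, sum_sum_sq_sub (fun i => φ (x i)) (fun j => φ (y j))]
  linear_combination (1 / 2 : ℝ) * hx + (1 / 2 : ℝ) * hy

theorem pairEnergy_sq_indicator_nonpos (s : Set α) (x : ι → α) (y : κ → α)
    (hcard₀ : Fintype.card κ ≤ Fintype.card ι) (hcard₁ : Fintype.card ι ≤ Fintype.card κ + 1) :
    pairEnergy (fun u v => (s.indicator 1 u - s.indicator 1 v) ^ 2) x y ≤ 0 := by
  classical
  have hsq : ∀ u, (s.indicator (1 : α → ℝ) u) ^ 2 = s.indicator 1 u := fun u => by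
    by_cases hu : u ∈ s <;> simp [hu]
  rw [pairEnergy_sq_sub]
  simp only [hsq]
  rw [sum_indicator_one_comp, sum_indicator_one_comp]
  exact sub_nonpos.2 <| by
    exact_mod_cast Int.mul_le_sq_of_nonneg_of_le_one (c := Fintype.card ι - Fintype.card κ)
      (by omega) (by omega) (#{i | x i ∈ s} - #{j | y j ∈ s})

section Integral

variable {Ω : Type*} [MeasurableSpace Ω] {μ : Measure Ω} {F : α → α → Ω → ℝ}

theorem integrable_pairSum (hF : ∀ u v, Integrable (F u v) μ) (x : ι → α) :
    Integrable (fun t => pairSum (fun u v => F u v t) x) μ :=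
  integrable_finsetSum _ fun i _ => integrable_finsetSum _ fun j _ => by
    split_ifs
    exacts [hF _ _, integrable_zero _ _ _]

theorem pairSum_integral (hF : ∀ u v, Integrable (F u v) μ) (x : ι → α) :
    pairSum (fun u v => ∫ t, F u v t ∂μ) x = ∫ t, pairSum (fun u v => F u v t) x ∂μ := by
  have hite : ∀ i j, Integrable (fun t => if i < j then F (x i) (x j) t else 0) μ := fun i j => by
    split_ifs
    exacts [hF _ _, integrable_zero _ _ _]
  simp only [pairSum]
  rw [integral_finsetSum _ fun i _ => integrable_finsetSum _ fun j _ => hite i j]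
  refine sum_congr rfl fun i _ => ?_
  rw [integral_finsetSum _ fun j _ => hite i j]
  refine sum_congr rfl fun j _ => ?_
  split_ifs <;> simp

theorem pairEnergy_integral (hF : ∀ u v, Integrable (F u v) μ) (x : ι → α) (y : κ → α) :
    pairEnergy (fun u v => ∫ t, F u v t ∂μ) x y = ∫ t, pairEnergy (fun u v => F u v t) x y ∂μ := by
  have hpairs : Integrable
      (fun t => pairSum (fun u v => F u v t) x + pairSum (fun u v => F u v t) y) μ :=
    (integrable_pairSum hF x).add (integrable_pairSum hF y)
  have hcross : Integrable (fun t => ∑ i, ∑ j, F (x i) (y j) t) μ :=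
    integrable_finsetSum _ fun i _ => integrable_finsetSum _ fun j _ => hF _ _
  simp only [pairEnergy]
  rw [integral_sub hpairs hcross, integral_add (integrable_pairSum hF x) (integrable_pairSum hF y),
    pairSum_integral hF, pairSum_integral hF,
    integral_finsetSum _ fun i _ => integrable_finsetSum _ fun j _ => hF _ _]
  simp only [integral_finsetSum _ fun j _ => hF _ _]

end Integral

end

theorem sq_indicator_Iic_sub (u v : ℝ) :
    (fun t => ((Set.Iic t).indicator (1 : ℝ → ℝ) u - (Set.Iic t).indicator 1 v) ^ 2) =
      (Set.Ico (min u v) (max u v)).indicator 1 := by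
  ext t
  by_cases hu : u ≤ t <;> by_cases hv : v ≤ t <;> simp [Set.indicator_apply, hu, hv]

theorem integral_sq_indicator_Iic_sub (u v : ℝ) :
    ∫ t, ((Set.Iic t).indicator (1 : ℝ → ℝ) u - (Set.Iic t).indicator 1 v) ^ 2 = |u - v| := by
  rw [sq_indicator_Iic_sub, integral_indicator_one measurableSet_Ico, measureReal_def,
    Real.volume_Ico, ENNReal.toReal_ofReal (sub_nonneg.2 min_le_max), max_sub_min_eq_abs']

theorem integrable_sq_indicator_Iic_sub (u v : ℝ) :
    Integrable fun t => ((Set.Iic t).indicator (1 : ℝ → ℝ) u - (Set.Iic t).indicator 1 v) ^ 2 := by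
  rw [sq_indicator_Iic_sub, integrable_indicator_iff measurableSet_Ico]
  exact integrableOn_const (by simp) (by simp)

theorem L_nonpos_general (n : ℕ) (x : Fin (n + 1) → ℝ) (y : Fin n → ℝ) :
    (∑ i : Fin (n + 1), ∑ j : Fin (n + 1), if i < j then |x i - x j| else 0)
      + (∑ i : Fin n, ∑ j : Fin n, if i < j then |y i - y j| else 0)
      - ∑ i : Fin (n + 1), ∑ j : Fin n, |x i - y j| ≤ 0 := by
  have habs : (fun u v : ℝ => |u - v|) = fun u v =>
      ∫ t, ((Set.Iic t).indicator (1 : ℝ → ℝ) u - (Set.Iic t).indicator 1 v) ^ 2 := by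
    ext u v
    exact (integral_sq_indicator_Iic_sub u v).symm
  change pairEnergy (fun u v : ℝ => |u - v|) x y ≤ 0
  rw [habs, pairEnergy_integral fun u v => integrable_sq_indicator_Iic_sub u v]
  exact integral_nonpos fun t =>
    pairEnergy_sq_indicator_nonpos _ x y (by simp) (by simp)

theorem L_nonpos (n : ℕ) (hn : 1 ≤ n) (x : Fin (n + 1) → ℝ) (y : Fin n → ℝ) :
    (∑ i : Fin (n + 1), ∑ j : Fin (n + 1), if i < j then |x i - x j| else 0)
      + (∑ i : Fin n, ∑ j : Fin n, if i < j then |y i - y j| else 0)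
      - ∑ i : Fin (n + 1), ∑ j : Fin n, |x i - y j| ≤ 0 :=
  L_nonpos_general n x y
end

section
/- Let n ≥ 1, x, y ∈ ℝ^n, and define R_n(y; x) = Σ_{1≤i<j≤n} |x_i − x_j| + Σ_{1≤i<j≤n} |y_i − y_j| − Σ_{i=1}^{n} Σ_{j=1}^{n} |x_i − y_j|, and ‖x‖ = |x_1| + … + |x_n|. Then for every ε ∈ [0, 1] one has R_n(y; x) ≤ ε (‖y‖ − ‖x‖). -/
/-!
Write `|a - b| = ∫ (𝟙[a < t] - 𝟙[b < t])² dt`. For points `z k` carrying integer weights `c k`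
of total weight `s`, the integrand of `∑ k l, c k * c l * |z k - z l|` collapses to
`2 W(t) (s - W(t))`, where `W(t)` is the (integer) weight of the points left of `t`; when
`|s| ≤ 1` no integer lies strictly between `0` and `s`, so the integrand is nonpositive.
Taking the points `x i` with weight `1`, `y j` with weight `-1` and `0` with weight `w` gives
`R_n(y; x) ≤ w (‖y‖ - ‖x‖)` for `w ∈ {0, 1}`, and the theorem is a convex combination of these.
-/

open Finset MeasureTheory

lemma abs_sub_eq_integral_indicator_uIoc (a b : ℝ) :
    |a - b| = ∫ t, (Set.uIoc a b).indicator 1 t := by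
  rw [integral_indicator_one measurableSet_uIoc, measureReal_def, Real.volume_uIoc,
    ENNReal.toReal_ofReal (abs_nonneg _), abs_sub_comm]

lemma indicator_uIoc_eq_sq (a b t : ℝ) :
    (Set.uIoc a b).indicator 1 t
      = ((if a < t then 1 else 0) - (if b < t then 1 else 0) : ℝ) ^ 2 := by
  by_cases ha : a < t <;> by_cases hb : b < t <;> simp [Set.mem_uIoc, ha, hb, not_lt.mp]

lemma sum_sum_mul_mul_sub_sq {ι : Type*} [Fintype ι] (c e : ι → ℝ)
    (he : ∀ k, e k * e k = e k) :
    ∑ k, ∑ l, c k * c l * (e k - e l) ^ 2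
      = 2 * (∑ k, c k * e k) * (∑ k, c k - ∑ k, c k * e k) := by
  have hsq : ∀ k l, c k * c l * (e k - e l) ^ 2
      = c k * e k * c l + c k * (c l * e l) - 2 * (c k * e k) * (c l * e l) := fun k l => by
    linear_combination c k * c l * (he k + he l)
  simp only [hsq, sum_sub_distrib, sum_add_distrib, ← mul_sum, ← sum_mul]
  ring

lemma Int.mul_sub_nonpos_of_abs_le_one {s w : ℤ} (hs : |s| ≤ 1) : w * (s - w) ≤ 0 := by
  rcases abs_le.mp hs with ⟨h1, h2⟩
  rcases lt_trichotomy w 0 with h | h | h <;> nlinarith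

theorem sum_sum_mul_abs_sub_nonpos {ι : Type*} [Fintype ι] (z : ι → ℝ) (c : ι → ℤ)
    (hc : |∑ k, c k| ≤ 1) :
    ∑ k, ∑ l, (c k * c l : ℝ) * |z k - z l| ≤ 0 := by
  set e : ι → ℝ → ℝ := fun k t => if z k < t then 1 else 0
  have he : ∀ t k, e k t * e k t = e k t := fun t k => by
    by_cases h : z k < t <;> simp [e, h]
  have hint : ∀ k l, Integrable fun t =>
      (c k * c l : ℝ) * (Set.uIoc (z k) (z l)).indicator 1 t := fun k l =>
    ((integrableOn_const (C := (1 : ℝ)) (by rw [Real.volume_uIoc]; exact ENNReal.ofReal_ne_top)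
      ).integrable_indicator measurableSet_uIoc).const_mul _
  calc ∑ k, ∑ l, (c k * c l : ℝ) * |z k - z l|
      = ∫ t, ∑ k, ∑ l, (c k * c l : ℝ) * (Set.uIoc (z k) (z l)).indicator 1 t := by
        rw [integral_finsetSum _ fun k _ => integrable_finsetSum _ fun l _ => hint k l]
        simp_rw [integral_finsetSum _ fun l _ => hint _ l, integral_const_mul,
          ← abs_sub_eq_integral_indicator_uIoc]
    _ = ∫ t, 2 * (∑ k, (c k : ℝ) * e k t) * (∑ k, (c k : ℝ) - ∑ k, (c k : ℝ) * e k t) := by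
        simp_rw [indicator_uIoc_eq_sq, ← sum_sum_mul_mul_sub_sq _ _ (he _)]
        rfl
    _ ≤ 0 := integral_nonpos fun t => by
        have hW : ∑ k, (c k : ℝ) * e k t = ((∑ k, if z k < t then c k else 0 : ℤ) : ℝ) := by
          push_cast [e, mul_ite]
          simp
        have := Int.mul_sub_nonpos_of_abs_le_one (w := ∑ k, if z k < t then c k else 0) hc
        rw [Pi.zero_apply, hW, ← Int.cast_sum]
        exact_mod_cast (by linarith)

lemma two_mul_sum_sum_ite_lt {ι : Type*} [Fintype ι] [LinearOrder ι] (f : ι → ι → ℝ)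
    (hsymm : ∀ i j, f i j = f j i) (hdiag : ∀ i, f i i = 0) :
    2 * ∑ i, ∑ j, (if i < j then f i j else 0) = ∑ i, ∑ j, f i j := by
  have hsplit : ∀ i j, f i j = (if i < j then f i j else 0) + (if j < i then f j i else 0) :=
    fun i j => by
      rcases lt_trichotomy i j with h | rfl | h
      · simp [h, h.not_gt]
      · simp [hdiag]
      · simp [h, h.not_gt, hsymm i j]
  rw [sum_congr rfl fun i _ => sum_congr rfl fun j _ => hsplit i j]
  simp only [sum_add_distrib]
  rw [sum_comm (f := fun i j => if j < i then f j i else 0)]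
  ring

/-- `R_n(y; x)` of the paper, for points indexed by any finite linear order. -/
noncomputable def energyGap {ι : Type*} [Fintype ι] [LinearOrder ι] (y x : ι → ℝ) : ℝ :=
  (∑ i, ∑ j, if i < j then |x i - x j| else 0)
    + (∑ i, ∑ j, if i < j then |y i - y j| else 0)
    - (∑ i, ∑ j, |x i - y j|)

theorem energyGap_le_mul {ι : Type*} [Fintype ι] [LinearOrder ι] (y x : ι → ℝ) (w : ℤ)
    (hw : |w| ≤ 1) :
    energyGap y x ≤ w * ((∑ i, |y i|) - ∑ i, |x i|) := by
  have key := sum_sum_mul_abs_sub_nonpos (ι := Option (ι ⊕ ι))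
    (fun k => k.elim 0 (Sum.elim x y)) (fun k => k.elim w (Sum.elim (fun _ => 1) (fun _ => -1)))
    (by simpa [Fintype.sum_option, Fintype.sum_sum_type] using hw)
  simp only [Fintype.sum_option, Fintype.sum_sum_type, Option.elim, Sum.elim_inl, Sum.elim_inr,
    Int.cast_one, Int.cast_neg, one_mul, mul_one, neg_mul, mul_neg, sub_zero, zero_sub, abs_neg,
    abs_zero, mul_zero, sum_add_distrib, sum_neg_distrib, ← mul_sum] at key
  have hyx : ∑ i, ∑ j, |y i - x j| = ∑ i, ∑ j, |x i - y j| := by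
    rw [sum_comm]
    exact sum_congr rfl fun _ _ => sum_congr rfl fun _ _ => abs_sub_comm _ _
  have hx := two_mul_sum_sum_ite_lt (fun i j => |x i - x j|) (fun _ _ => abs_sub_comm _ _)
    (fun _ => by simp)
  have hy := two_mul_sum_sum_ite_lt (fun i j => |y i - y j|) (fun _ _ => abs_sub_comm _ _)
    (fun _ => by simp)
  rw [energyGap]
  linarith

theorem R_le_eps_mul_general (n : ℕ) (x y : Fin n → ℝ) (ε : ℝ)
    (hε : ε ∈ Set.Icc (0 : ℝ) 1) :
    (∑ i : Fin n, ∑ j : Fin n, if i < j then |x i - x j| else 0)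
      + (∑ i : Fin n, ∑ j : Fin n, if i < j then |y i - y j| else 0)
      - (∑ i : Fin n, ∑ j : Fin n, |x i - y j|)
    ≤ ε * ((∑ i : Fin n, |y i|) - ∑ i : Fin n, |x i|) := by
  have h0 := energyGap_le_mul y x 0 (by simp)
  have h1 := energyGap_le_mul y x 1 (by simp)
  push_cast at h0 h1
  change energyGap y x ≤ _
  nlinarith [mul_le_mul_of_nonneg_left h1 hε.1, mul_le_mul_of_nonneg_left h0 (sub_nonneg.2 hε.2)]

theorem R_le_eps_mul (n : ℕ) (hn : 1 ≤ n) (x y : Fin n → ℝ) (ε : ℝ)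
    (hε : ε ∈ Set.Icc (0 : ℝ) 1) :
    (∑ i : Fin n, ∑ j : Fin n, if i < j then |x i - x j| else 0)
      + (∑ i : Fin n, ∑ j : Fin n, if i < j then |y i - y j| else 0)
      - (∑ i : Fin n, ∑ j : Fin n, |x i - y j|)
    ≤ ε * ((∑ i : Fin n, |y i|) - ∑ i : Fin n, |x i|) :=
  R_le_eps_mul_general n x y ε hε
end

section
/- Let n ≥ 1 and x, y ∈ ℝ^n. Then R_n(y; x) ≤ ‖y‖ − ‖x‖, where R_n(y; x) = Σ_{1≤i<j≤n} |x_i − x_j| + Σ_{1≤i<j≤n} |y_i − y_j| − Σ_{i=1}^{n} Σ_{j=1}^{n} |x_i − y_j| and ‖x‖ = |x_1| + … + |x_n|. -/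
/-!
Adjoining the point `0` to `x` turns the claim into the inequality
`∑ |xᵢ - xᵢ'| + ∑ |yⱼ - yⱼ'| ≤ 2 ∑ |xᵢ - yⱼ|` for two families whose sizes `m`, `m'` differ by at
most one. The layer-cake formula `|a - b| = ∫ |𝟙[t ≤ a] - 𝟙[t ≤ b]| dt` reduces this to
`0`/`1`-valued families. If these have `A` and `B` ones, the inequality reads
`2 (A - B) (m - m' - (A - B)) ≤ 0`, which holds for integers with `|m - m'| ≤ 1`.
-/

open Finset MeasureTheory
open scoped symmDiff

theorem sum_sum_ite_lt_add_self {ι M : Type*} [Fintype ι] [LinearOrder ι] [AddCommMonoid M]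
    (g : ι → ι → M) (hg : ∀ i j, g i j = g j i) (hdiag : ∀ i, g i i = 0) :
    (∑ i, ∑ j, if i < j then g i j else 0) + ∑ i, ∑ j, (if i < j then g i j else 0)
      = ∑ i, ∑ j, g i j := by
  conv_lhs => enter [2]; rw [sum_comm]
  rw [← sum_add_distrib]
  refine sum_congr rfl fun i _ => ?_
  rw [← sum_add_distrib]
  refine sum_congr rfl fun j _ => ?_
  rcases lt_trichotomy i j with h | rfl | h
  · simp [h, h.not_gt]
  · simp [hdiag]
  · simp [h, h.not_gt, hg i j]

theorem Set.Iic_symmDiff_Iic {α : Type*} [LinearOrder α] (a b : α) :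
    Set.Iic a ∆ Set.Iic b = Set.uIoc a b := by
  ext t
  simp only [Set.mem_symmDiff, Set.mem_Iic, Set.mem_uIoc, not_le]
  grind

theorem indicator_uIoc_eq_abs_sub_indicator_Iic {α : Type*} [LinearOrder α] (a b t : α) :
    (Set.uIoc a b).indicator 1 t
      = |(Set.Iic a).indicator (1 : α → ℝ) t - (Set.Iic b).indicator 1 t| := by
  rw [← Set.abs_indicator_symmDiff, Set.Iic_symmDiff_Iic, eq_comm, abs_eq_self]
  exact Set.indicator_nonneg (fun _ _ => zero_le_one) t

section SumAbsSub

variable {ι κ : Type*} [Fintype ι] [Fintype κ]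

def sumAbsSub (x : ι → ℝ) (y : κ → ℝ) : ℝ := ∑ i, ∑ j, |x i - y j|

theorem abs_sub_of_zero_or_one {a b : ℝ} (ha : a = 0 ∨ a = 1) (hb : b = 0 ∨ b = 1) :
    |a - b| = a + b - 2 * (a * b) := by
  rcases ha with rfl | rfl <;> rcases hb with rfl | rfl <;> norm_num

theorem sumAbsSub_of_zero_or_one {u : ι → ℝ} {v : κ → ℝ} (hu : ∀ i, u i = 0 ∨ u i = 1)
    (hv : ∀ j, v j = 0 ∨ v j = 1) :
    sumAbsSub u v = Fintype.card κ * ∑ i, u i + Fintype.card ι * ∑ j, v j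
      - 2 * ((∑ i, u i) * ∑ j, v j) := by
  simp only [sumAbsSub, abs_sub_of_zero_or_one (hu _) (hv _), sum_sub_distrib, sum_add_distrib,
    sum_const, card_univ, nsmul_eq_mul, ← mul_sum, ← sum_mul]

theorem exists_sum_eq_natCast_of_zero_or_one {u : ι → ℝ} (hu : ∀ i, u i = 0 ∨ u i = 1) :
    ∃ A : ℕ, ∑ i, u i = A := by
  refine ⟨#{i | u i = 1}, ?_⟩
  rw [← sum_boole]
  exact sum_congr rfl fun i _ => by rcases hu i with h | h <;> simp [h]

theorem sumAbsSub_self_add_sumAbsSub_self_le_of_zero_or_one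
    (hι : Fintype.card ι ≤ Fintype.card κ + 1) (hκ : Fintype.card κ ≤ Fintype.card ι + 1)
    {u : ι → ℝ} {v : κ → ℝ} (hu : ∀ i, u i = 0 ∨ u i = 1) (hv : ∀ j, v j = 0 ∨ v j = 1) :
    sumAbsSub u u + sumAbsSub v v ≤ 2 * sumAbsSub u v := by
  rw [sumAbsSub_of_zero_or_one hu hu, sumAbsSub_of_zero_or_one hv hv,
    sumAbsSub_of_zero_or_one hu hv]
  obtain ⟨A, hA⟩ := exists_sum_eq_natCast_of_zero_or_one hu
  obtain ⟨B, hB⟩ := exists_sum_eq_natCast_of_zero_or_one hv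
  rw [hA, hB]
  have hι' : (Fintype.card ι : ℝ) ≤ Fintype.card κ + 1 := by exact_mod_cast hι
  have hκ' : (Fintype.card κ : ℝ) ≤ Fintype.card ι + 1 := by exact_mod_cast hκ
  rcases lt_trichotomy A B with h | rfl | h
  · have : (A : ℝ) + 1 ≤ B := by exact_mod_cast h
    nlinarith
  · nlinarith
  · have : (B : ℝ) + 1 ≤ A := by exact_mod_cast h
    nlinarith

theorem integrable_indicator_uIoc (a b : ℝ) :
    Integrable ((Set.uIoc a b).indicator (1 : ℝ → ℝ)) :=
  (integrable_indicator_iff measurableSet_uIoc).2 <| integrableOn_const (by simp)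

theorem integral_indicator_uIoc (a b : ℝ) :
    ∫ t, (Set.uIoc a b).indicator (1 : ℝ → ℝ) t = |a - b| := by
  rw [integral_indicator_one measurableSet_uIoc, measureReal_def, Real.volume_uIoc,
    ENNReal.toReal_ofReal (abs_nonneg _), abs_sub_comm]

theorem integrable_sum_sum_indicator_uIoc (x : ι → ℝ) (y : κ → ℝ) :
    Integrable fun t => ∑ i, ∑ j, (Set.uIoc (x i) (y j)).indicator (1 : ℝ → ℝ) t :=
  integrable_finsetSum _ fun i _ =>
    integrable_finsetSum _ fun j _ => integrable_indicator_uIoc (x i) (y j)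

theorem integral_sum_sum_indicator_uIoc (x : ι → ℝ) (y : κ → ℝ) :
    ∫ t, ∑ i, ∑ j, (Set.uIoc (x i) (y j)).indicator (1 : ℝ → ℝ) t = sumAbsSub x y := by
  rw [integral_finsetSum _ fun i _ =>
    integrable_finsetSum _ fun j _ => integrable_indicator_uIoc (x i) (y j)]
  refine sum_congr rfl fun i _ => ?_
  rw [integral_finsetSum _ fun j _ => integrable_indicator_uIoc (x i) (y j)]
  exact sum_congr rfl fun j _ => integral_indicator_uIoc (x i) (y j)

theorem sumAbsSub_self_add_sumAbsSub_self_le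
    (hι : Fintype.card ι ≤ Fintype.card κ + 1) (hκ : Fintype.card κ ≤ Fintype.card ι + 1)
    (x : ι → ℝ) (y : κ → ℝ) :
    sumAbsSub x x + sumAbsSub y y ≤ 2 * sumAbsSub x y := by
  have h01 (a t : ℝ) :
      (Set.Iic a).indicator (1 : ℝ → ℝ) t = 0 ∨ (Set.Iic a).indicator (1 : ℝ → ℝ) t = 1 :=
    Set.indicator_eq_zero_or_self (Set.Iic a) 1 t
  have layer (t : ℝ) := sumAbsSub_self_add_sumAbsSub_self_le_of_zero_or_one hι hκ
    (u := fun i => (Set.Iic (x i)).indicator 1 t) (v := fun j => (Set.Iic (y j)).indicator 1 t)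
    (fun i => h01 _ t) (fun j => h01 _ t)
  simp only [sumAbsSub, ← indicator_uIoc_eq_abs_sub_indicator_Iic] at layer
  have integrated := integral_mono ((integrable_sum_sum_indicator_uIoc x x).add
    (integrable_sum_sum_indicator_uIoc y y))
    ((integrable_sum_sum_indicator_uIoc x y).const_mul 2) layer
  simp only [Pi.add_apply] at integrated
  rwa [integral_add (integrable_sum_sum_indicator_uIoc x x)
    (integrable_sum_sum_indicator_uIoc y y), integral_const_mul,
    integral_sum_sum_indicator_uIoc, integral_sum_sum_indicator_uIoc,
    integral_sum_sum_indicator_uIoc] at integrated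

end SumAbsSub

theorem R_le_norm_sub_general (n : ℕ) (x y : Fin n → ℝ) :
    (∑ i : Fin n, ∑ j : Fin n, if i < j then |x i - x j| else 0)
      + (∑ i : Fin n, ∑ j : Fin n, if i < j then |y i - y j| else 0)
      - (∑ i : Fin n, ∑ j : Fin n, |x i - y j|)
    ≤ (∑ i : Fin n, |y i|) - ∑ i : Fin n, |x i| := by
  have pairs (z : Fin n → ℝ) := sum_sum_ite_lt_add_self (fun i j => |z i - z j|)
    (fun i j => abs_sub_comm (z i) (z j)) (fun i => by simp)
  have energy := sumAbsSub_self_add_sumAbsSub_self_le (by simp) (by simp; omega)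
    (Fin.cons 0 x : Fin (n + 1) → ℝ) y
  simp only [sumAbsSub, Fin.sum_univ_succ, Fin.cons_zero, Fin.cons_succ, abs_zero,
    zero_sub, sub_zero, abs_neg, zero_add, sum_add_distrib] at energy
  linarith [pairs x, pairs y]

theorem R_le_norm_sub (n : ℕ) (hn : 1 ≤ n) (x y : Fin n → ℝ) :
    (∑ i : Fin n, ∑ j : Fin n, if i < j then |x i - x j| else 0)
      + (∑ i : Fin n, ∑ j : Fin n, if i < j then |y i - y j| else 0)
      - (∑ i : Fin n, ∑ j : Fin n, |x i - y j|)
    ≤ (∑ i : Fin n, |y i|) - ∑ i : Fin n, |x i| :=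
  R_le_norm_sub_general n x y
end

section
/- Let n ≥ 1 and x, y ∈ ℝ^n. Then R_n(y; x) ≤ 0, where R_n(y; x) = Σ_{1≤i<j≤n} |x_i − x_j| + Σ_{1≤i<j≤n} |y_i − y_j| − Σ_{i=1}^{n} Σ_{j=1}^{n} |x_i − y_j|. -/
/-!
Write `signedIco a b t = 1[a ≤ t] - 1[b ≤ t]`. Then
`∫ signedIco a b * signedIco c d = (|a - d| + |b - c| - |a - c| - |b - d|) / 2`, so summing over
`(a, b) = (xᵢ, yᵢ)` and `(c, d) = (xⱼ, yⱼ)` turns `2 ∑ᵢⱼ |xᵢ - yⱼ| - ∑ᵢⱼ |xᵢ - xⱼ| - ∑ᵢⱼ |yᵢ - yⱼ|`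
into `∫ (∑ᵢ signedIco xᵢ yᵢ)²`, which is nonnegative.
-/

open Finset MeasureTheory

noncomputable def signedIco (a b : ℝ) (t : ℝ) : ℝ :=
  (Set.Ico a b).indicator 1 t - (Set.Ico b a).indicator 1 t

lemma integrable_indicator_Ico (a b : ℝ) : Integrable ((Set.Ico a b).indicator (1 : ℝ → ℝ)) :=
  (integrable_indicator_iff measurableSet_Ico).2 (integrableOn_const measure_Ico_lt_top.ne)

lemma integrable_signedIco (a b : ℝ) : Integrable (signedIco a b) :=
  (integrable_indicator_Ico a b).sub (integrable_indicator_Ico b a)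

lemma integral_signedIco (a b : ℝ) : ∫ t, signedIco a b t = b - a := by
  simp only [signedIco]
  rw [integral_sub (integrable_indicator_Ico a b) (integrable_indicator_Ico b a),
    integral_indicator_one measurableSet_Ico, integral_indicator_one measurableSet_Ico,
    Real.volume_real_Ico, Real.volume_real_Ico]
  rcases le_total a b with h | h
  · rw [max_eq_left (by linarith), max_eq_right (by linarith)]; ring
  · rw [max_eq_right (by linarith), max_eq_left (by linarith)]; ring

-- Expand `(1[a ≤ t] - 1[b ≤ t]) * (1[c ≤ t] - 1[d ≤ t])` using `1[a ≤ t] * 1[c ≤ t] = 1[a ⊔ c ≤ t]`.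
lemma signedIco_mul_signedIco (a b c d t : ℝ) :
    signedIco a b t * signedIco c d t =
      signedIco (a ⊔ c) (a ⊔ d) t + signedIco (b ⊔ d) (b ⊔ c) t := by
  simp only [signedIco, Set.indicator_apply, Set.mem_Ico, Pi.one_apply, max_le_iff,
    lt_max_iff]
  by_cases h1 : a ≤ t <;> by_cases h2 : b ≤ t <;> by_cases h3 : c ≤ t <;> by_cases h4 : d ≤ t <;>
    simp [h1, h2, h3, h4, not_le.1, not_lt.2]

lemma max_eq_add_add_abs_sub_div_two (a b : ℝ) : a ⊔ b = (a + b + |a - b|) / 2 := by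
  linarith [max_add_min a b, max_sub_min_eq_abs a b, abs_sub_comm a b]

lemma integral_signedIco_mul_signedIco (a b c d : ℝ) :
    ∫ t, signedIco a b t * signedIco c d t = (|a - d| + |b - c| - |a - c| - |b - d|) / 2 := by
  simp only [signedIco_mul_signedIco]
  rw [integral_add (integrable_signedIco _ _) (integrable_signedIco _ _), integral_signedIco,
    integral_signedIco]
  simp only [max_eq_add_add_abs_sub_div_two]
  ring

lemma sum_sum_abs_sub_add_sum_sum_abs_sub_le {ι : Type*} [Fintype ι] (x y : ι → ℝ) :
    ∑ i, ∑ j, |x i - x j| + ∑ i, ∑ j, |y i - y j| ≤ 2 * ∑ i, ∑ j, |x i - y j| := by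
  have h_integrable (i j : ι) :
      Integrable fun t => signedIco (x i) (y i) t * signedIco (x j) (y j) t := by
    simp only [signedIco_mul_signedIco]
    exact (integrable_signedIco _ _).add (integrable_signedIco _ _)
  have h_expand : ∫ t, (∑ i, signedIco (x i) (y i) t) ^ 2 =
      ∑ i, ∑ j, (|x i - y j| + |y i - x j| - |x i - x j| - |y i - y j|) / 2 := by
    simp only [sq, Finset.sum_mul_sum]
    rw [integral_finsetSum _ fun i _ => integrable_finsetSum _ fun j _ => h_integrable i j]
    refine Finset.sum_congr rfl fun i _ => ?_
    rw [integral_finsetSum _ fun j _ => h_integrable i j]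
    exact Finset.sum_congr rfl fun j _ => integral_signedIco_mul_signedIco _ _ _ _
  have h_swap : ∑ i, ∑ j, |y i - x j| = ∑ i, ∑ j, |x i - y j| := by
    rw [Finset.sum_comm]
    simp only [abs_sub_comm]
  have h_nonneg : 0 ≤ ∫ t, (∑ i, signedIco (x i) (y i) t) ^ 2 :=
    integral_nonneg fun t => sq_nonneg _
  rw [h_expand] at h_nonneg
  simp only [← Finset.sum_div, Finset.sum_sub_distrib, Finset.sum_add_distrib, h_swap] at h_nonneg
  linarith

lemma sum_sum_abs_sub_eq_two_mul {ι : Type*} [Fintype ι] [LinearOrder ι] (f : ι → ℝ) :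
    ∑ i, ∑ j, |f i - f j| = 2 * ∑ i, ∑ j, if i < j then |f i - f j| else 0 := by
  have h_split (i j : ι) : |f i - f j| =
      (if i < j then |f i - f j| else 0) + (if j < i then |f j - f i| else 0) := by
    rcases lt_trichotomy i j with h | rfl | h
    · simp [h, h.not_gt]
    · simp
    · simp [h, h.not_gt, abs_sub_comm]
  rw [Finset.sum_congr rfl fun i _ => Finset.sum_congr rfl fun j _ => h_split i j]
  simp only [Finset.sum_add_distrib]
  rw [Finset.sum_comm (f := fun i j => if j < i then |f j - f i| else 0)]
  ring

theorem R_nonpos_general (n : ℕ) (x y : Fin n → ℝ) :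
    (∑ i : Fin n, ∑ j : Fin n, if i < j then |x i - x j| else 0)
      + (∑ i : Fin n, ∑ j : Fin n, if i < j then |y i - y j| else 0)
      - (∑ i : Fin n, ∑ j : Fin n, |x i - y j|) ≤ 0 := by
  have h_le := sum_sum_abs_sub_add_sum_sum_abs_sub_le x y
  rw [sum_sum_abs_sub_eq_two_mul x, sum_sum_abs_sub_eq_two_mul y] at h_le
  linarith

theorem R_nonpos (n : ℕ) (hn : 1 ≤ n) (x y : Fin n → ℝ) :
    (∑ i : Fin n, ∑ j : Fin n, if i < j then |x i - x j| else 0)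
      + (∑ i : Fin n, ∑ j : Fin n, if i < j then |y i - y j| else 0)
      - (∑ i : Fin n, ∑ j : Fin n, |x i - y j|) ≤ 0 :=
  R_nonpos_general n x y
end

section
/- Let f : ℝ → ℂ be a smooth compactly supported function and let λ' ∈ ℝ. Then lim_{ε→0+} ∫_ℝ f(λ) [ 1/(λ − λ' − iε) − 1/(λ − λ' + iε) ] dλ = 2πi f(λ'). -/
open Filter MeasureTheory Complex

lemma sp_key (x e : ℝ) (he : e ≠ 0) :
    1 / ((x : ℂ) - Complex.I * e) - 1 / ((x : ℂ) + Complex.I * e)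
      = 2 * Complex.I * e / (((x : ℂ))^2 + (e : ℂ)^2) := by
  have h1 : (x : ℂ) - Complex.I * e ≠ 0 := by
    intro h
    have := congrArg Complex.im h
    simp at this
    exact he this
  have h2 : (x : ℂ) + Complex.I * e ≠ 0 := by
    intro h
    have := congrArg Complex.im h
    simp at this
    exact he this
  have h3 : ((x : ℂ))^2 + (e : ℂ)^2 ≠ 0 := by
    have : ((x : ℂ))^2 + (e : ℂ)^2 = ((x : ℂ) - Complex.I * e) * ((x : ℂ) + Complex.I * e) := by
      linear_combination ((e:ℂ)^2) * Complex.I_sq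
    rw [this]
    exact mul_ne_zero h1 h2
  field_simp
  linear_combination (2*(e:ℂ)^3*Complex.I) * Complex.I_sq

theorem sokhotski_plemelj_difference (f : ℝ → ℂ) (hf : ContDiff ℝ (⊤ : ℕ∞) f)
    (hfc : HasCompactSupport f) (μ' : ℝ) :
    Tendsto (fun eps : ℝ =>
        ∫ lam : ℝ,
          f lam * (1 / ((lam : ℂ) - (μ' : ℂ) - Complex.I * (eps : ℂ))
            - 1 / ((lam : ℂ) - (μ' : ℂ) + Complex.I * (eps : ℂ))))
      (nhdsWithin 0 (Set.Ioi 0)) (nhds (2 * (Real.pi : ℂ) * Complex.I * f μ')) := by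
  have hcont := hf.continuous
  obtain ⟨C, hC⟩ := hfc.exists_bound_of_continuous hcont
  have hne : ∀ t : ℝ, ((1:ℂ) + (t:ℂ)^2) ≠ 0 := by
    intro t h
    have h2 : ((1 + t^2 : ℝ) : ℂ) = 0 := by push_cast; linear_combination h
    have h3 := Complex.ofReal_eq_zero.mp h2
    nlinarith
  -- step 1 : eventual equality with ∫ t, f (eps * t + μ') * (2 * I) * (1 + t^2)⁻¹
  have hkey : ∀ᶠ (eps : ℝ) in nhdsWithin (0:ℝ) (Set.Ioi 0),
      (∫ lam : ℝ,
          f lam * (1 / ((lam : ℂ) - (μ' : ℂ) - Complex.I * (eps : ℂ))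
            - 1 / ((lam : ℂ) - (μ' : ℂ) + Complex.I * (eps : ℂ))))
        = ∫ t : ℝ, f (eps * t + μ') * (2 * Complex.I) * ((1 : ℂ) + (t : ℂ)^2)⁻¹ := by
    filter_upwards [self_mem_nhdsWithin] with eps (heps : 0 < eps)
    have h1 : (fun lam : ℝ =>
        f lam * (1 / ((lam : ℂ) - (μ' : ℂ) - Complex.I * (eps : ℂ))
            - 1 / ((lam : ℂ) - (μ' : ℂ) + Complex.I * (eps : ℂ))))
        = fun lam : ℝ => f lam * (2 * Complex.I * eps / ((((lam - μ' : ℝ)) : ℂ)^2 + (eps:ℂ)^2)) := by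
      funext lam
      rw [← sp_key (lam - μ') eps heps.ne']
      push_cast
      ring_nf
    rw [h1]
    -- change of variables lam = μ' + eps * t
    set g : ℝ → ℂ := fun x : ℝ => f (x + μ') * (2 * Complex.I * eps / (((x:ℝ) : ℂ)^2 + (eps:ℂ)^2))
    have h2 : (∫ lam : ℝ, f lam * (2 * Complex.I * eps / ((((lam - μ' : ℝ)) : ℂ)^2 + (eps:ℂ)^2)))
        = ∫ x : ℝ, g x := by
      rw [← integral_add_right_eq_self _ μ']
      congr 1
      funext x
      simp [g, sub_add_cancel]
    have h4 : ∫ x : ℝ, g x = ∫ t : ℝ, (eps : ℝ) • g (eps * t) := by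
      rw [integral_smul, Measure.integral_comp_mul_left g eps,
        abs_of_pos (inv_pos.mpr heps), smul_smul, mul_inv_cancel₀ heps.ne', one_smul]
    rw [h2, h4]
    congr 1
    funext t
    have he2 : ((eps : ℂ))^2 ≠ 0 := by
      norm_cast
      positivity
    have hden : ((eps:ℂ))^2 * ((1:ℂ) + (t:ℂ)^2) ≠ 0 := mul_ne_zero he2 (hne t)
    simp only [g]
    push_cast
    rw [Complex.real_smul]
    have : ((eps:ℂ) * t)^2 + (eps:ℂ)^2 = (eps:ℂ)^2 * (1 + (t:ℂ)^2) := by ring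
    rw [this]
    field_simp [hne t, he2]
    have hε : (eps:ℂ) ≠ 0 := by exact_mod_cast heps.ne'
    ring_nf
    field_simp
  rw [tendsto_congr' hkey]
  -- step 2: dominated convergence
  have hlim : Tendsto (fun eps : ℝ => ∫ t : ℝ, f (eps * t + μ') * (2 * Complex.I) * ((1 : ℂ) + (t : ℂ)^2)⁻¹)
      (nhdsWithin (0:ℝ) (Set.Ioi 0))
      (nhds (∫ t : ℝ, f μ' * (2 * Complex.I) * ((1 : ℂ) + (t : ℂ)^2)⁻¹)) := by
    apply tendsto_integral_filter_of_dominated_convergence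
      (fun t : ℝ => C * 2 * (1 + t^2)⁻¹)
    · filter_upwards with eps
      apply Continuous.aestronglyMeasurable
      exact ((hcont.comp (by fun_prop)).mul continuous_const).mul
        (Continuous.inv₀ (by fun_prop) hne)
    · filter_upwards with eps
      filter_upwards with t
      rw [norm_mul, norm_mul]
      have h1 : ‖f (eps * t + μ')‖ ≤ C := hC _
      have h2 : ‖(2 * Complex.I : ℂ)‖ = 2 := by simp
      have h3 : ‖((1 : ℂ) + (t : ℂ)^2)⁻¹‖ = (1 + t^2)⁻¹ := by
        rw [norm_inv]
        congr 1
        have : ((1 : ℂ) + (t : ℂ)^2) = ((1 + t^2 : ℝ) : ℂ) := by push_cast; ring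
        rw [this, Complex.norm_real]
        exact abs_of_pos (by positivity)
      rw [h2, h3]
      have hpos : (0:ℝ) ≤ (1 + t^2)⁻¹ := by positivity
      exact mul_le_mul_of_nonneg_right
        (mul_le_mul_of_nonneg_right (hC (eps*t+μ')) (by norm_num : (0:ℝ) ≤ 2)) hpos
    · exact (integrable_inv_one_add_sq.const_mul (C * 2))
    · filter_upwards with t
      have h1 : Tendsto (fun eps : ℝ => eps * t + μ') (nhdsWithin (0:ℝ) (Set.Ioi 0)) (nhds μ') := by
        have h0 : ContinuousAt (fun eps : ℝ => eps * t + μ') 0 := by fun_prop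
        have := h0.tendsto.mono_left (nhdsWithin_le_nhds (s := Set.Ioi (0:ℝ)))
        simpa using this
      have h2 := ((hcont.tendsto μ').comp h1).mul_const (2*Complex.I)
      exact h2.mul_const _
  convert hlim using 2
  rw [integral_const_mul]
  have : (∫ t : ℝ, ((1 : ℂ) + (t : ℂ)^2)⁻¹) = ((Real.pi : ℝ) : ℂ) := by
    have e1 : (∫ t : ℝ, ((1 : ℂ) + (t : ℂ)^2)⁻¹) = ∫ t : ℝ, (((1 + t^2)⁻¹ : ℝ) : ℂ) := by
      congr 1
      funext t
      push_cast
      ring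
    rw [e1, show (∫ t : ℝ, (((1 + t^2)⁻¹ : ℝ) : ℂ)) = ((∫ t : ℝ, (1+t^2)⁻¹ : ℝ) : ℂ) from integral_ofReal,
      integral_univ_inv_one_add_sq]
  rw [this]
  ring
end

section
/- For k ≥ 1 let y^{(k)} ∈ ℝ^k and define S_1 = 0 and, for m ≥ 2, S_m(y^{(1)}, …, y^{(m)}) = Σ_{1≤i≠j≤m} |y^{(m)}_i − y^{(m)}_j| − Σ_{i=1}^{m} Σ_{j=1}^{m−1} |y^{(m)}_i − y^{(m−1)}_j| + S_{m−1}(y^{(1)}, …, y^{(m−1)}). Then for every n ≥ 2, every x ∈ ℝ^n, every y^{(1)} ∈ ℝ^1, …, y^{(n−1)} ∈ ℝ^{n−1}, and every ε ∈ [0, 2(n − 1)], one has S_n(y^{(1)}, …, y^{(n−1)}, x) ≤ (1/2) Σ_{1≤i≠j≤n} |x_i − x_j| + ε ‖x‖ − (ε / ((n − 1)! · e)) Σ_{k=1}^{n−1} ‖y^{(k)}‖. -/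
/-!
Writing `|x - y| = ∫ (1_{t < x} - 1_{t < y})² dt`, one gets `∑ c_i c_j |x_i - x_j| ≤ 0` for integer
weights with `|∑ c_i| ≤ 1`: for each `t` the integrand equals `2 (S G - G²)` with integers
`S = ∑ c_i` and `G`, and `S G ≤ |G| ≤ G²`. Applied to the points `a_i` (weight `1`), `b_j`
(weight `-1`) and the origin (weight `0` or `-2`), this gives, for `a ∈ ℝ^{k+1}`, `b ∈ ℝ^k` and
`s ∈ [0, 2]`,
  `½ ∑ |a_i - a_j| + ½ ∑ |b_i - b_j| + s (‖b‖ - ‖a‖) ≤ ∑ |a_i - b_j|`.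
Using this with `s = ε` at every level of the recursion, and lowering `ε` by `c` from one level to
the next, yields `S_{n+1} ≤ ½ ∑ |x_i - x_j| + ε ‖x‖ - c ∑ ‖y^{(k)}‖` whenever `0 ≤ c` and
`n c ≤ ε ≤ 2`.
For `c = ε / (n! e)` this holds with `ε` replaced by `min ε 2`, because `n² ≤ 2 n! ≤ e n!`.
-/

open Finset

/-- The recursively defined quantity `S_m(y^{(1)}, …, y^{(m)})`, where the `k`-th tuple
`y^{(k+1)}` (0-based index `k : Fin m`) has length `k + 1`:
`S_1 = 0` and
`S_m = Σ_{i≠j} |y^{(m)}_i − y^{(m)}_j| − Σ_{i=1}^m Σ_{j=1}^{m−1} |y^{(m)}_i − y^{(m−1)}_j| + S_{m−1}`. -/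
def Srec : (m : ℕ) → ((k : Fin m) → Fin ((k : ℕ) + 1) → ℝ) → ℝ
  | 0, _ => 0
  | 1, _ => 0
  | m + 2, Y =>
      (∑ i : Fin (m + 2), ∑ j : Fin (m + 2),
          if i ≠ j then |Y (Fin.last (m + 1)) i - Y (Fin.last (m + 1)) j| else 0)
        - (∑ i : Fin (m + 2), ∑ j : Fin (m + 1),
            |Y (Fin.last (m + 1)) i - Y ((Fin.last m).castSucc) j|)
        + Srec (m + 1) (fun k => Y k.castSucc)

open MeasureTheory

theorem sq_sub_ite_lt_eq_indicator {x y : ℝ} (hxy : x ≤ y) (t : ℝ) :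
    ((if t < x then (1 : ℝ) else 0) - if t < y then 1 else 0) ^ 2
      = (Set.Ico x y).indicator 1 t := by
  by_cases hx : t < x
  · simp [hx, hx.trans_le hxy, not_le.2 hx]
  · by_cases hy : t < y <;> simp [hx, hy, not_lt.1 hx]

theorem abs_sub_eq_integral_sq_sub_ite_lt (x y : ℝ) :
    |x - y| = ∫ t, ((if t < x then (1 : ℝ) else 0) - if t < y then 1 else 0) ^ 2 := by
  wlog hxy : x ≤ y generalizing x y
  · rw [abs_sub_comm, this y x (le_of_not_ge hxy)]
    simp only [← neg_sub (if _ < x then _ else _), neg_sq]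
  simp only [sq_sub_ite_lt_eq_indicator hxy, integral_indicator_one measurableSet_Ico,
    Real.volume_real_Ico_of_le hxy, abs_sub_comm x, abs_of_nonneg (sub_nonneg.2 hxy)]

theorem integrable_sq_sub_ite_lt (x y : ℝ) :
    Integrable fun t => ((if t < x then (1 : ℝ) else 0) - if t < y then 1 else 0) ^ 2 := by
  wlog hxy : x ≤ y generalizing x y
  · simpa only [← neg_sub (if _ < x then _ else _), neg_sq] using this y x (le_of_not_ge hxy)
  simp only [sq_sub_ite_lt_eq_indicator hxy]
  exact (integrable_indicator_iff measurableSet_Ico).2 (integrableOn_const measure_Ico_lt_top.ne)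

theorem mul_le_sq_of_abs_le_one {s : ℤ} (hs : |s| ≤ 1) (n : ℤ) : s * n ≤ n ^ 2 := by
  calc s * n ≤ |s| * |n| := (le_abs_self _).trans_eq (abs_mul s n)
    _ ≤ |n| := mul_le_of_le_one_left (abs_nonneg n) hs
    _ ≤ n ^ 2 := (Int.le_self_sq |n|).trans_eq (sq_abs n)

theorem sum_mul_mul_sq_sub_eq {ι R : Type*} [Fintype ι] [CommRing R] (c g : ι → R)
    (hg : ∀ i, g i ^ 2 = g i) :
    ∑ i, ∑ j, c i * c j * (g i - g j) ^ 2
      = 2 * ((∑ i, c i) * (∑ i, c i * g i) - (∑ i, c i * g i) ^ 2) := by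
  have hterm : ∀ i j, c i * c j * (g i - g j) ^ 2
      = c j * (c i * g i) + c i * (c j * g j) - 2 * (c i * g i) * (c j * g j) := fun i j => by
    linear_combination c i * c j * (hg i + hg j)
  simp only [hterm, sum_add_distrib, sum_sub_distrib, ← mul_sum, ← sum_mul]
  ring

theorem sum_mul_mul_abs_sub_nonpos {ι : Type*} [Fintype ι] (c : ι → ℤ) (x : ι → ℝ)
    (hc : |∑ i, c i| ≤ 1) :
    ∑ i, ∑ j, (c i : ℝ) * c j * |x i - x j| ≤ 0 := by
  let g : ι → ℝ → ℤ := fun i t => if t < x i then 1 else 0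
  have hg : ∀ i t, g i t ^ 2 = g i t := fun i t => by by_cases h : t < x i <;> simp [g, h]
  have hpoint : ∀ t, ∑ i, ∑ j, c i * c j * (g i t - g j t) ^ 2 ≤ 0 := fun t => by
    rw [sum_mul_mul_sq_sub_eq c (g · t) (hg · t)]
    linarith [mul_le_sq_of_abs_le_one hc (∑ i, c i * g i t)]
  have hinteg : ∀ i j, Integrable fun t => (c i : ℝ) * c j * (g i t - g j t : ℝ) ^ 2 :=
    fun i j => by simpa [g] using (integrable_sq_sub_ite_lt (x i) (x j)).const_mul _
  calc ∑ i, ∑ j, (c i : ℝ) * c j * |x i - x j|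
      = ∫ t, ((∑ i, ∑ j, c i * c j * (g i t - g j t) ^ 2 : ℤ) : ℝ) := by
        push_cast
        rw [integral_finsetSum _ fun i _ => integrable_finsetSum _ fun j _ => hinteg i j]
        refine sum_congr rfl fun i _ => ?_
        rw [integral_finsetSum _ fun j _ => hinteg i j]
        refine sum_congr rfl fun j _ => ?_
        simp [g, integral_const_mul, abs_sub_eq_integral_sq_sub_ite_lt]
    _ ≤ 0 := integral_nonpos fun t => Int.cast_nonpos.2 (hpoint t)

section

variable {ι κ : Type*} [Fintype ι] [Fintype κ] (a : ι → ℝ) (b : κ → ℝ)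

theorem le_sum_sum_abs_sub_of_card_eq_add_one_of_intCast
    (hcard : Fintype.card ι = Fintype.card κ + 1) {w : ℤ} (hw0 : 0 ≤ w) (hw2 : w ≤ 2) :
    (1 / 2) * ∑ i, ∑ j, |a i - a j| + (1 / 2) * ∑ i, ∑ j, |b i - b j|
        + w * (∑ j, |b j| - ∑ i, |a i|) ≤ ∑ i, ∑ j, |a i - b j| := by
  let c : Option (ι ⊕ κ) → ℤ := fun o => o.elim (-w) (Sum.elim 1 (-1))
  let p : Option (ι ⊕ κ) → ℝ := fun o => o.elim 0 (Sum.elim a b)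
  have hsum : ∑ o, c o = 1 - w := by
    simp [c, Fintype.sum_option, Fintype.sum_sum_type, hcard, neg_add_eq_sub]
  have hexp : ∑ o, ∑ o', (c o : ℝ) * c o' * |p o - p o'|
      = ∑ i, ∑ j, |a i - a j| + ∑ i, ∑ j, |b i - b j| + 2 * w * (∑ j, |b j| - ∑ i, |a i|)
        - 2 * ∑ i, ∑ j, |a i - b j| := by
    simp only [c, p, Fintype.sum_option, Fintype.sum_sum_type, Option.elim_none, Option.elim_some,
      Sum.elim_inl, Sum.elim_inr, Pi.one_apply, Pi.neg_apply, Int.cast_neg, Int.cast_one, mul_one,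
      one_mul, mul_neg, neg_mul, mul_zero, sub_zero, zero_sub, abs_neg, abs_zero,
      sum_neg_distrib, sum_add_distrib, ← mul_sum, abs_sub_comm (b _) (a _),
      sum_comm (f := fun j i => |a i - b j|)]
    ring
  have := sum_mul_mul_abs_sub_nonpos c p (by rw [hsum, abs_le]; omega)
  linarith

theorem le_sum_sum_abs_sub_of_card_eq_add_one (hcard : Fintype.card ι = Fintype.card κ + 1)
    {s : ℝ} (hs0 : 0 ≤ s) (hs2 : s ≤ 2) :
    (1 / 2) * ∑ i, ∑ j, |a i - a j| + (1 / 2) * ∑ i, ∑ j, |b i - b j|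
        + s * (∑ j, |b j| - ∑ i, |a i|) ≤ ∑ i, ∑ j, |a i - b j| := by
  have h₀ := le_sum_sum_abs_sub_of_card_eq_add_one_of_intCast a b hcard le_rfl zero_le_two
  have h₂ := le_sum_sum_abs_sub_of_card_eq_add_one_of_intCast a b hcard zero_le_two le_rfl
  push_cast at h₀ h₂
  -- the left side is affine in `s`, so the cases `s = 0` and `s = 2` suffice
  nlinarith [mul_nonneg hs0 (sub_nonneg.2 h₂), mul_nonneg (sub_nonneg.2 hs2) (sub_nonneg.2 h₀)]

end

theorem sum_sum_ite_ne_abs_sub {ι : Type*} [Fintype ι] [DecidableEq ι] (v : ι → ℝ) :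
    (∑ i, ∑ j, if i ≠ j then |v i - v j| else 0) = ∑ i, ∑ j, |v i - v j| :=
  sum_congr rfl fun i _ => sum_congr rfl fun j _ => by by_cases h : i = j <;> simp [h]

theorem Srec_le (n : ℕ) (Z : (k : Fin (n + 1)) → Fin ((k : ℕ) + 1) → ℝ) {ε c : ℝ}
    (hc : 0 ≤ c) (hcε : n * c ≤ ε) (hε : ε ≤ 2) :
    Srec (n + 1) Z ≤
      (1 / 2) * ∑ i : Fin (n + 1), ∑ j : Fin (n + 1), |Z (Fin.last n) i - Z (Fin.last n) j|
        + ε * ∑ i : Fin (n + 1), |Z (Fin.last n) i|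
        - c * ∑ k : Fin n, ∑ j : Fin ((k : ℕ) + 1), |Z k.castSucc j| := by
  induction n generalizing ε with
  | zero =>
    have hε0 : 0 ≤ ε := by simpa using hcε
    simpa [Srec] using mul_nonneg hε0 (abs_nonneg (Z 0 0))
  | succ n ih =>
    have hε0 : 0 ≤ ε := le_trans (by positivity) hcε
    have hIH := ih (fun k => Z k.castSucc) (ε := ε - c)
      (by push_cast at hcε; linarith) (by linarith)
    have hcross := le_sum_sum_abs_sub_of_card_eq_add_one (ι := Fin (n + 2)) (κ := Fin (n + 1))
      (Z (Fin.last (n + 1))) (Z (Fin.last n).castSucc) (by simp) hε0 hε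
    have hsplit : ∑ k : Fin (n + 1), ∑ j : Fin (k + 1), |Z k.castSucc j|
        = ∑ k : Fin n, ∑ j : Fin (k + 1), |Z k.castSucc.castSucc j|
          + ∑ j : Fin (n + 1), |Z (Fin.last n).castSucc j| := Fin.sum_univ_castSucc _
    rw [Srec, sum_sum_ite_ne_abs_sub, hsplit]
    linarith

theorem add_one_sq_le_factorial_mul_exp_one (n : ℕ) :
    ((n : ℝ) + 1) ^ 2 ≤ (n + 1).factorial * Real.exp 1 := by
  have hn : n + 1 ≤ 2 * n.factorial := by
    rcases n with _ | n
    · simp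
    · have := Nat.self_le_factorial (n + 1)
      omega
  have h2 : ((n : ℝ) + 1) ^ 2 ≤ 2 * (n + 1).factorial := by
    rw [Nat.factorial_succ, sq]
    push_cast
    nlinarith [show ((n : ℝ) + 1) ≤ 2 * n.factorial by exact_mod_cast hn]
  have he : 2 ≤ Real.exp 1 := by linarith [Real.add_one_le_exp 1]
  nlinarith [(Nat.cast_pos (α := ℝ)).2 (Nat.factorial_pos (n + 1))]

theorem Srec_bound (m : ℕ) (x : Fin (m + 2) → ℝ)
    (Y : (k : Fin (m + 1)) → Fin ((k : ℕ) + 1) → ℝ) (ε : ℝ)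
    (hε : ε ∈ Set.Icc (0 : ℝ) (2 * (m + 1))) :
    Srec (m + 2)
        (Fin.lastCases (motive := fun k : Fin (m + 2) => Fin ((k : ℕ) + 1) → ℝ) x Y)
      ≤ (1 / 2) * (∑ i : Fin (m + 2), ∑ j : Fin (m + 2), if i ≠ j then |x i - x j| else 0)
        + ε * (∑ i : Fin (m + 2), |x i|)
        - (ε / ((Nat.factorial (m + 1) : ℝ) * Real.exp 1))
            * ∑ k : Fin (m + 1), ∑ j : Fin ((k : ℕ) + 1), |Y k j| := by
  obtain ⟨hε0, hε2⟩ := hε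
  have hD : 0 < (Nat.factorial (m + 1) : ℝ) * Real.exp 1 := by positivity
  have hsq := add_one_sq_le_factorial_mul_exp_one m
  have hc : 0 ≤ ε / ((Nat.factorial (m + 1) : ℝ) * Real.exp 1) := by positivity
  have hcε : (m + 1) * (ε / ((Nat.factorial (m + 1) : ℝ) * Real.exp 1)) ≤ min ε 2 := by
    rw [le_min_iff, mul_div_assoc', div_le_iff₀ hD, div_le_iff₀ hD]
    have hle : (m : ℝ) + 1 ≤ (Nat.factorial (m + 1) : ℝ) * Real.exp 1 := by nlinarith
    constructor
    · nlinarith [mul_le_mul_of_nonneg_left hle hε0]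
    · nlinarith [mul_le_mul_of_nonneg_left hε2 (by positivity : (0 : ℝ) ≤ m + 1)]
  have h := Srec_le (m + 1)
    (Fin.lastCases (motive := fun k : Fin (m + 2) => Fin ((k : ℕ) + 1) → ℝ) x Y) hc
    (by exact_mod_cast hcε) (min_le_right ε 2)
  simp only [Fin.lastCases_last, Fin.lastCases_castSucc] at h
  have hmin : min ε 2 * ∑ i, |x i| ≤ ε * ∑ i, |x i| :=
    mul_le_mul_of_nonneg_right (min_le_left ε 2) (sum_nonneg fun i _ => abs_nonneg (x i))
  rw [sum_sum_ite_ne_abs_sub]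
  linarith
end
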